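/- Let (ψ_n)_{n≥0} and (χ_n)_{n≥0} be systems of functions in L²(Ω) satisfying the bi-orthonormality ⟨χ_n, ψ_m⟩ = [n = m] and the recursions χ_n' = 2ψ_{n−1} − 2ψ_{n+1} and χ_n = 2εψ_{n−1} − 2εψ_{n+1} (with ψ_{−1} = 0), where ε is skew-symmetric and satisfies ε(χ_n') = χ_n. Then for n, m of the same parity: ⟨ψ_n, εψ_m⟩ = 0. -/
import Mathlib


open Real MeasureTheory

/-- The antiderivative operator `(εf)(x) = (1/2)∫_Ω sgn(x−y) f(y) dy`. -/
noncomputable def eps (Ω : Set ℝ) (f : ℝ → ℝ) (x : ℝ) : ℝ :=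
  (1 / 2) * ∫ y in Ω, Real.sign (x - y) * f y

lemma measurable_realSign : Measurable Real.sign := by
  unfold Real.sign
  exact Measurable.ite (measurableSet_lt measurable_id measurable_const) measurable_const
    (Measurable.ite (measurableSet_lt measurable_const measurable_id) measurable_const
      measurable_const)

/-- Skew-symmetry of the pairing `⟨f, εg⟩ = −⟨g, εf⟩`. -/
lemma eps_skew (Ω : Set ℝ) (f g : ℝ → ℝ) (hf : IntegrableOn f Ω) (hg : IntegrableOn g Ω) :
    ∫ x in Ω, f x * eps Ω g x = - ∫ x in Ω, g x * eps Ω f x := by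
  set μ := volume.restrict Ω with hμ
  have hint : Integrable (fun p : ℝ × ℝ => Real.sign (p.1 - p.2) * (f p.1 * g p.2))
      (μ.prod μ) := by
    have hmul : Integrable (fun p : ℝ × ℝ => f p.1 * g p.2) (μ.prod μ) := hf.mul_prod hg
    refine hmul.abs.mono' ?_ ?_
    · exact ((measurable_realSign.comp (measurable_fst.sub measurable_snd)).aestronglyMeasurable).mul
        hmul.aestronglyMeasurable
    · refine Filter.Eventually.of_forall fun p => ?_
      have h1 : |Real.sign (p.1 - p.2)| ≤ 1 := by
        rcases lt_trichotomy (p.1 - p.2) 0 with h | h | h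
        · rw [Real.sign_of_neg h]; norm_num
        · rw [h, Real.sign_zero]; norm_num
        · rw [Real.sign_of_pos h]; norm_num
      calc ‖Real.sign (p.1 - p.2) * (f p.1 * g p.2)‖
          = |Real.sign (p.1 - p.2)| * |f p.1 * g p.2| := abs_mul _ _
        _ ≤ 1 * |f p.1 * g p.2| := mul_le_mul_of_nonneg_right h1 (abs_nonneg _)
        _ = |f p.1 * g p.2| := one_mul _
  have swap := integral_integral_swap (μ := μ) (ν := μ)
    (f := fun x y => Real.sign (x - y) * (f x * g y)) hint
  calc ∫ x in Ω, f x * eps Ω g x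
      = ∫ x in Ω, (1 / 2 : ℝ) * ∫ y in Ω, Real.sign (x - y) * (f x * g y) := by
        rw [show (fun x => f x * eps Ω g x)
            = fun x => (1 / 2 : ℝ) * ∫ y in Ω, Real.sign (x - y) * (f x * g y) from
          funext fun x => by
            rw [show (fun y => Real.sign (x - y) * (f x * g y))
                = fun y => f x * (Real.sign (x - y) * g y) from funext fun y => by ring]
            rw [integral_const_mul, eps]
            ring]
    _ = (1 / 2 : ℝ) * ∫ x in Ω, ∫ y in Ω, Real.sign (x - y) * (f x * g y) :=
        integral_const_mul _ _
    _ = (1 / 2 : ℝ) * ∫ y in Ω, ∫ x in Ω, Real.sign (x - y) * (f x * g y) := by rw [swap]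
    _ = (1 / 2 : ℝ) * ∫ y in Ω, -(g y * ∫ x in Ω, Real.sign (y - x) * f x) := by
        congr 1
        rw [show (fun y => ∫ x in Ω, Real.sign (x - y) * (f x * g y))
            = fun y => -(g y * ∫ x in Ω, Real.sign (y - x) * f x) from funext fun y => by
          rw [show (fun x => Real.sign (x - y) * (f x * g y))
              = fun x => (-g y) * (Real.sign (y - x) * f x) from funext fun x => by
            rw [show x - y = -(y - x) by ring, Real.sign_neg]; ring]
          rw [integral_const_mul]
          ring]
    _ = - ∫ y in Ω, g y * eps Ω f y := by
        rw [integral_neg]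
        rw [show (fun y => g y * eps Ω f y)
            = fun y => (1 / 2 : ℝ) * (g y * ∫ x in Ω, Real.sign (y - x) * f x) from
          funext fun y => by rw [eps]; ring]
        rw [integral_const_mul]
        ring

theorem stmt11 (Ω : Set ℝ) (hΩ : MeasurableSet Ω) (ψ χ : ℕ → ℝ → ℝ)
    (hψ : ∀ n, IntegrableOn (ψ n) Ω)
    (hprod : ∀ n m, IntegrableOn (fun x => ψ n x * eps Ω (ψ m) x) Ω)
    (hbi : ∀ n m, ∫ x in Ω, χ n x * ψ m x = if n = m then 1 else 0)
    (hderiv : ∀ (n : ℕ) (x : ℝ),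
      HasDerivAt (χ n) ((if n = 0 then 0 else 2 * ψ (n - 1) x) - 2 * ψ (n + 1) x) x)
    (hchi : ∀ (n : ℕ) (x : ℝ),
      χ n x = (if n = 0 then 0 else 2 * eps Ω (ψ (n - 1)) x) - 2 * eps Ω (ψ (n + 1)) x) :
    ∀ n m : ℕ, n % 2 = m % 2 → ∫ x in Ω, ψ n x * eps Ω (ψ m) x = 0 := by
  let F : ℕ → ℕ → ℝ := fun n m => ∫ x in Ω, ψ n x * eps Ω (ψ m) x
  suffices H : ∀ n m : ℕ, n % 2 = m % 2 → F n m = 0 from H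
  -- skew symmetry
  have hskew : ∀ a b, F a b = - F b a := fun a b => eps_skew Ω (ψ a) (ψ b) (hψ a) (hψ b)
  -- the key recursion
  have hB : ∀ n m : ℕ, (if n = 0 then 0 else 2 * F m (n - 1)) - 2 * F m (n + 1)
      = if n = m then (1 : ℝ) else 0 := by
    intro n m
    rw [← hbi n m]
    rw [show (fun x => χ n x * ψ m x)
        = fun x => ((if n = 0 then 0 else 2 * eps Ω (ψ (n - 1)) x)
            - 2 * eps Ω (ψ (n + 1)) x) * ψ m x from funext fun x => by rw [hchi n x]]
    by_cases hn : n = 0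
    · subst hn
      rw [if_pos rfl]
      rw [show (fun x => ((if (0 : ℕ) = 0 then (0 : ℝ) else 2 * eps Ω (ψ (0 - 1)) x)
            - 2 * eps Ω (ψ (0 + 1)) x) * ψ m x)
          = fun x => (-2 : ℝ) * (ψ m x * eps Ω (ψ (0 + 1)) x) from funext fun x => by
        rw [if_pos rfl]; ring]
      rw [integral_const_mul]
      show (0 : ℝ) - 2 * F m (0 + 1) = (-2 : ℝ) * F m (0 + 1)
      ring
    · rw [if_neg hn]
      rw [show (fun x => ((if n = 0 then (0 : ℝ) else 2 * eps Ω (ψ (n - 1)) x)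
            - 2 * eps Ω (ψ (n + 1)) x) * ψ m x)
          = fun x => (2 : ℝ) * (ψ m x * eps Ω (ψ (n - 1)) x)
            - (2 : ℝ) * (ψ m x * eps Ω (ψ (n + 1)) x) from funext fun x => by
        rw [if_neg hn]; ring]
      rw [integral_sub ((hprod m (n - 1)).const_mul 2) ((hprod m (n + 1)).const_mul 2),
        integral_const_mul, integral_const_mul]
  have hF00 : F 0 0 = 0 := by have := hskew 0 0; linarith
  have hD : ∀ k : ℕ, F 0 (2 * k) = 0 := by
    intro k
    induction k with
    | zero => simpa using hF00
    | succ k ih =>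
      have h := hB (2 * k + 1) 0
      rw [if_neg (by omega : ¬ 2 * k + 1 = 0), if_neg (by omega : ¬ 2 * k + 1 = 0)] at h
      have h1 : (2 * k + 1) - 1 = 2 * k := by omega
      have h2 : (2 * k + 1) + 1 = 2 * (k + 1) := by omega
      rw [h1, h2, ih] at h
      linarith
  intro n
  induction n using Nat.strong_induction_on with
  | _ n ih =>
    intro m hpar
    match n, ih, hpar with
    | 0, _, hpar =>
      obtain ⟨k, rfl⟩ : ∃ k, m = 2 * k := ⟨m / 2, by omega⟩
      exact hD k
    | 1, _, hpar =>
      have h := hB 0 m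
      rw [if_pos rfl, if_neg (by omega : ¬ (0 : ℕ) = m)] at h
      have hm1 : F m (0 + 1) = 0 := by linarith
      rw [hskew 1 m]
      have : F m 1 = 0 := hm1
      rw [this, neg_zero]
    | (k + 2), ih, hpar =>
      have h := hB (k + 1) m
      rw [if_neg (by omega : ¬ k + 1 = 0), if_neg (by omega : ¬ k + 1 = m)] at h
      have h1 : (k + 1) - 1 = k := by omega
      rw [h1] at h
      have hk : F k m = 0 := ih k (by omega) m (by omega)
      have hmk : F m k = 0 := by rw [hskew m k, hk, neg_zero]
      rw [hmk] at h
      have h2 : F m (k + 1 + 1) = 0 := by linarith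
      rw [hskew (k + 2) m]
      have : F m (k + 2) = 0 := h2
      rw [this, neg_zero]
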